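/- Let m be a monomial in the n-mode Weyl algebra with multi-degree (α, β) and α ≠ β. Then with g₊(m) = i(m† + m) and g₋(m) = m† − m, the commutator satisfies deg([g₊(m), g₋(m)]) = 2(|α| + |β|) − 2, and moreover [g₊(m), g₋(m)] agrees, up to terms of degree strictly less than 2(|α|+|β|)−2, with −2i ∑ₖ (αₖ² − βₖ²) a^{(α+β−eₖ, α+β−eₖ)}, where eₖ is the k-th standard basis vector. -/

import Mathlib

open scoped BigOperators

namespace WeylPaper

/-- Defining relations of the `n`-th Weyl algebra: generators `Sum.inl k` are the
annihilation operators `aₖ`, generators `Sum.inr k` are the creation operators `aₖ†`,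
with `[aᵢ, aⱼ†] = δᵢⱼ` and all other commutators of generators vanishing. -/
inductive WeylRel (n : ℕ) :
    FreeAlgebra ℂ (Fin n ⊕ Fin n) → FreeAlgebra ℂ (Fin n ⊕ Fin n) → Prop
  | ann_cre (i j : Fin n) :
      WeylRel n (FreeAlgebra.ι ℂ (Sum.inl i) * FreeAlgebra.ι ℂ (Sum.inr j))
        (FreeAlgebra.ι ℂ (Sum.inr j) * FreeAlgebra.ι ℂ (Sum.inl i) +
          if i = j then 1 else 0)
  | ann_ann (i j : Fin n) :
      WeylRel n (FreeAlgebra.ι ℂ (Sum.inl i) * FreeAlgebra.ι ℂ (Sum.inl j))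
        (FreeAlgebra.ι ℂ (Sum.inl j) * FreeAlgebra.ι ℂ (Sum.inl i))
  | cre_cre (i j : Fin n) :
      WeylRel n (FreeAlgebra.ι ℂ (Sum.inr i) * FreeAlgebra.ι ℂ (Sum.inr j))
        (FreeAlgebra.ι ℂ (Sum.inr j) * FreeAlgebra.ι ℂ (Sum.inr i))

/-- The `n`-th Weyl algebra `Aₙ`. -/
abbrev Weyl (n : ℕ) := RingQuot (WeylRel n)

/-- The annihilation operator `aₖ`. -/
noncomputable def ann {n : ℕ} (k : Fin n) : Weyl n :=
  RingQuot.mkAlgHom ℂ (WeylRel n) (FreeAlgebra.ι ℂ (Sum.inl k))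

/-- The creation operator `aₖ†`. -/
noncomputable def cre {n : ℕ} (k : Fin n) : Weyl n :=
  RingQuot.mkAlgHom ℂ (WeylRel n) (FreeAlgebra.ι ℂ (Sum.inr k))

/-- The commutator `[x, y] = xy - yx`. -/
def comm {n : ℕ} (x y : Weyl n) : Weyl n := x * y - y * x

/-- The normal-ordered monomial `a^{(α,β)} = ∏ⱼ (aⱼ†)^{αⱼ} · ∏ⱼ aⱼ^{βⱼ}`. -/
noncomputable def nom {n : ℕ} (α β : Fin n → ℕ) : Weyl n :=
  ((List.finRange n).map fun j => cre j ^ α j).prod *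
  ((List.finRange n).map fun j => ann j ^ β j).prod

/-- `degLe x d` : `x` admits an expansion into normal-ordered monomials of degree
`|γ| = |α| + |β| ≤ d` (this is "deg(x) ≤ d"; it holds for `x = 0` and every `d`,
matching `deg 0 = -∞`). -/
def degLe {n : ℕ} (x : Weyl n) (d : ℤ) : Prop :=
  ∃ c : ((Fin n → ℕ) × (Fin n → ℕ)) →₀ ℂ,
    x = c.sum (fun γ z => z • nom γ.1 γ.2) ∧
    ∀ γ ∈ c.support, ((∑ j, γ.1 j : ℕ) : ℤ) + ((∑ j, γ.2 j : ℕ) : ℤ) ≤ d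

/-- `hasDeg x d` : `x` has degree exactly `d`. -/
def hasDeg {n : ℕ} (x : Weyl n) (d : ℤ) : Prop := degLe x d ∧ ¬ degLe x (d - 1)

/-- The generator corresponding to a letter. -/
noncomputable def gen {n : ℕ} : (Fin n ⊕ Fin n) → Weyl n := Sum.elim ann cre

/-- The monomial (word in the generators `aₖ`, `aₖ†`) given by a list of letters. -/
noncomputable def word {n : ℕ} (w : List (Fin n ⊕ Fin n)) : Weyl n := (w.map gen).prod

/-- `α` : number of occurrences of `aⱼ†` in the word `w`. -/
def mdegC {n : ℕ} (w : List (Fin n ⊕ Fin n)) (j : Fin n) : ℕ := w.count (Sum.inr j)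

/-- `β` : number of occurrences of `aⱼ` in the word `w`. -/
def mdegA {n : ℕ} (w : List (Fin n ⊕ Fin n)) (j : Fin n) : ℕ := w.count (Sum.inl j)

/-- The basis element `g₊^{(α,β)} = i (a^{(β,α)} + a^{(α,β)})`. -/
noncomputable def gplus {n : ℕ} (α β : Fin n → ℕ) : Weyl n :=
  Complex.I • (nom β α + nom α β)

/-- The basis element `g₋^{(α,β)} = a^{(β,α)} - a^{(α,β)}`. -/
noncomputable def gminus {n : ℕ} (α β : Fin n → ℕ) : Weyl n :=
  nom β α - nom α β

/-- Type synonym for the opposite algebra, with ℂ acting through conjugation;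
used to construct the adjoint `(·)†`. -/
def Conj (n : ℕ) : Type := (Weyl n)ᵐᵒᵖ

instance (n : ℕ) : Ring (Conj n) := inferInstanceAs (Ring (Weyl n)ᵐᵒᵖ)

noncomputable instance (n : ℕ) : Algebra ℂ (Conj n) :=
  RingHom.toAlgebra' ((algebraMap ℂ (Weyl n)ᵐᵒᵖ).comp (starRingEnd ℂ))
    (fun c x =>
      Algebra.commutes (A := (Weyl n)ᵐᵒᵖ) (starRingEnd ℂ c) (show (Weyl n)ᵐᵒᵖ from x))

noncomputable def daggerAux (n : ℕ) : FreeAlgebra ℂ (Fin n ⊕ Fin n) →ₐ[ℂ] Conj n :=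
  FreeAlgebra.lift ℂ fun s =>
    (MulOpposite.op (Sum.elim (fun k => cre k) (fun k => ann k) s : Weyl n) : Conj n)

noncomputable def daggerHom (n : ℕ) : Weyl n →+* Conj n :=
  RingQuot.lift ⟨(daggerAux n).toRingHom, by
    have key : ∀ (x y : FreeAlgebra ℂ (Fin n ⊕ Fin n)), WeylRel n x y →
        RingQuot.mkAlgHom ℂ (WeylRel n) x = RingQuot.mkAlgHom ℂ (WeylRel n) y :=
      fun x y h => RingQuot.mkAlgHom_rel ℂ h
    intro x y h
    induction h with
    | ann_cre i j =>
        show (daggerAux n) _ = (daggerAux n) _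
        by_cases hij : i = j
        · subst hij
          have hcomm : (ann i : Weyl n) * cre i = cre i * ann i + 1 := by
            have hrel := key _ _ (WeylRel.ann_cre i i)
            rw [if_pos rfl] at hrel
            simpa [ann, cre] using hrel
          simp only [eq_self_iff_true, if_true, ite_true, map_mul, map_add, map_one, daggerAux,
            FreeAlgebra.lift_ι_apply, Sum.elim_inl, Sum.elim_inr]
          erw [FreeAlgebra.lift_ι_apply, FreeAlgebra.lift_ι_apply]
          calc (MulOpposite.op (cre i) : Conj n) * MulOpposite.op (ann i)
              = MulOpposite.op ((ann i : Weyl n) * cre i) := rfl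
            _ = MulOpposite.op ((cre i : Weyl n) * ann i + 1) := by rw [hcomm]
            _ = MulOpposite.op (ann i) * MulOpposite.op (cre i) + 1 := rfl
        · have hcomm : (ann j : Weyl n) * cre i = cre i * ann j := by
            have hrel := key _ _ (WeylRel.ann_cre j i)
            rw [if_neg (fun h => hij h.symm)] at hrel
            simpa [ann, cre] using hrel
          simp only [if_neg hij, map_mul, map_add, map_zero, add_zero, daggerAux,
            FreeAlgebra.lift_ι_apply, Sum.elim_inl, Sum.elim_inr]
          erw [FreeAlgebra.lift_ι_apply, FreeAlgebra.lift_ι_apply]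
          calc (MulOpposite.op (cre i) : Conj n) * MulOpposite.op (ann j)
              = MulOpposite.op ((ann j : Weyl n) * cre i) := rfl
            _ = MulOpposite.op ((cre i : Weyl n) * ann j) := by rw [hcomm]
            _ = MulOpposite.op (ann j) * MulOpposite.op (cre i) := rfl
    | ann_ann i j =>
        show (daggerAux n) _ = (daggerAux n) _
        have hcomm : (cre j : Weyl n) * cre i = cre i * cre j := by
          simpa [cre] using key _ _ (WeylRel.cre_cre j i)
        simp only [map_mul, daggerAux, FreeAlgebra.lift_ι_apply, Sum.elim_inl]
        erw [FreeAlgebra.lift_ι_apply, FreeAlgebra.lift_ι_apply]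
        calc (MulOpposite.op (cre i) : Conj n) * MulOpposite.op (cre j)
            = MulOpposite.op ((cre j : Weyl n) * cre i) := rfl
          _ = MulOpposite.op ((cre i : Weyl n) * cre j) := by rw [hcomm]
          _ = MulOpposite.op (cre j) * MulOpposite.op (cre i) := rfl
    | cre_cre i j =>
        show (daggerAux n) _ = (daggerAux n) _
        have hcomm : (ann j : Weyl n) * ann i = ann i * ann j := by
          simpa [ann] using key _ _ (WeylRel.ann_ann j i)
        simp only [map_mul, daggerAux, FreeAlgebra.lift_ι_apply, Sum.elim_inr]
        erw [FreeAlgebra.lift_ι_apply, FreeAlgebra.lift_ι_apply]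
        calc (MulOpposite.op (ann i) : Conj n) * MulOpposite.op (ann j)
            = MulOpposite.op ((ann j : Weyl n) * ann i) := rfl
          _ = MulOpposite.op ((ann i : Weyl n) * ann j) := by rw [hcomm]
          _ = MulOpposite.op (ann j) * MulOpposite.op (ann i) := rfl⟩

/-- The adjoint `(·)†` : the ℂ-antilinear anti-automorphism of the Weyl algebra
determined by `(aⱼ)† = aⱼ†` and `(aⱼ†)† = aⱼ`. -/
noncomputable def dagger {n : ℕ} (x : Weyl n) : Weyl n :=
  MulOpposite.unop (show (Weyl n)ᵐᵒᵖ from daggerHom n x)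


variable {n : ℕ}

lemma ann_mul_cre (i j : Fin n) :
    ann i * cre j = cre j * ann i + if i = j then 1 else 0 := by
  have h := RingQuot.mkAlgHom_rel ℂ (WeylRel.ann_cre i j)
  rw [map_mul, map_add,
    show (RingQuot.mkAlgHom ℂ (WeylRel n)) (if i = j then 1 else 0) = if i = j then 1 else 0
      by split <;> simp] at h
  simpa [ann, cre] using h

lemma ann_mul_ann (i j : Fin n) : ann i * ann j = ann j * ann i := by
  have h := RingQuot.mkAlgHom_rel ℂ (WeylRel.ann_ann i j)
  simpa [map_mul, ann] using h

lemma cre_mul_cre (i j : Fin n) : cre i * cre j = cre j * cre i := by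
  have h := RingQuot.mkAlgHom_rel ℂ (WeylRel.cre_cre i j)
  simpa [map_mul, cre] using h

lemma commute_ann_ann (i j : Fin n) : Commute (ann i) (ann j) := ann_mul_ann i j
lemma commute_cre_cre (i j : Fin n) : Commute (cre i) (cre j) := cre_mul_cre i j

/-! ### words -/

@[simp] lemma word_nil : word ([] : List (Fin n ⊕ Fin n)) = 1 := rfl

@[simp] lemma word_cons (a : Fin n ⊕ Fin n) (l : List (Fin n ⊕ Fin n)) :
    word (a :: l) = gen a * word l := by
  simp [word]

lemma word_append (l₁ l₂ : List (Fin n ⊕ Fin n)) :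
    word (l₁ ++ l₂) = word l₁ * word l₂ := by
  simp [word]

@[simp] lemma gen_inl (k : Fin n) : gen (Sum.inl k) = ann k := rfl
@[simp] lemma gen_inr (k : Fin n) : gen (Sum.inr k) = cre k := rfl

/-! ### products of powers -/

noncomputable def cP (α : Fin n → ℕ) : Weyl n :=
  ((List.finRange n).map fun j => cre j ^ α j).prod

noncomputable def aP (β : Fin n → ℕ) : Weyl n :=
  ((List.finRange n).map fun j => ann j ^ β j).prod

lemma nom_eq_cP_aP (α β : Fin n → ℕ) : nom α β = cP α * aP β := rfl

section prodlemmas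

lemma commute_G_prod (G : Fin n → Weyl n) (hG : ∀ i j, Commute (G i) (G j))
    (x : Fin n) (l : List (Fin n)) (α : Fin n → ℕ) :
    Commute (G x) ((l.map fun j => G j ^ α j).prod) := by
  apply Commute.list_prod_right
  intro y hy
  simp only [List.mem_map] at hy
  obtain ⟨j, _, rfl⟩ := hy
  exact (hG x j).pow_right _

lemma prod_pow_mul_single (G : Fin n → Weyl n) (hG : ∀ i j, Commute (G i) (G j))
    (k : Fin n) (α : Fin n → ℕ) :
    ∀ l : List (Fin n), l.Nodup → k ∈ l →
    ((l.map fun j => G j ^ α j).prod) * G k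
      = (l.map fun j => G j ^ ((α + Pi.single k 1 : Fin n → ℕ) j)).prod := by
  intro l
  induction l with
  | nil => intro _ hk; cases hk
  | cons j t ih =>
    intro hl hk
    simp only [List.map_cons, List.prod_cons]
    rcases List.nodup_cons.mp hl with ⟨hjt, hnd⟩
    by_cases hjk : j = k
    · subst hjk
      have hc : Commute (G j) ((t.map fun i => G i ^ α i).prod) := commute_G_prod G hG j t α
      have ht : (t.map fun i => G i ^ ((α + Pi.single j 1 : Fin n → ℕ) i)) = t.map fun i => G i ^ α i := by
        apply List.map_congr_left
        intro i hi
        have hij : i ≠ j := fun h => hjt (h ▸ hi)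
        simp [Pi.single_apply, hij]
      rw [ht, mul_assoc, ← hc.eq, ← mul_assoc, ← pow_succ]
      congr 1
      simp [Pi.single_apply]
    · have hkt : k ∈ t := by
        rcases List.mem_cons.mp hk with h | h
        · exact absurd h.symm hjk
        · exact h
      rw [mul_assoc, ih hnd hkt]
      congr 1
      simp [Pi.single_apply, hjk]

end prodlemmas
/-! ### cP / aP lemmas -/

lemma cP_mul_cre (α : Fin n → ℕ) (k : Fin n) :
    cP α * cre k = cP (α + Pi.single k 1) :=
  prod_pow_mul_single cre commute_cre_cre k α (List.finRange n)
    (List.nodup_finRange n) (List.mem_finRange k)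

lemma cre_mul_cP (α : Fin n → ℕ) (k : Fin n) :
    cre k * cP α = cP (α + Pi.single k 1) :=
  ((commute_G_prod cre commute_cre_cre k (List.finRange n) α).eq).trans (cP_mul_cre α k)

lemma aP_mul_ann (β : Fin n → ℕ) (k : Fin n) :
    aP β * ann k = aP (β + Pi.single k 1) :=
  prod_pow_mul_single ann commute_ann_ann k β (List.finRange n)
    (List.nodup_finRange n) (List.mem_finRange k)

lemma ann_mul_aP (β : Fin n → ℕ) (k : Fin n) :
    ann k * aP β = aP (β + Pi.single k 1) :=
  ((commute_G_prod ann commute_ann_ann k (List.finRange n) β).eq).trans (aP_mul_ann β k)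

lemma ann_mul_cre_pow (k j : Fin n) (m : ℕ) :
    ann k * cre j ^ m = cre j ^ m * ann k + (if k = j then (m : ℂ) else 0) • cre j ^ (m - 1) := by
  by_cases hkj : k = j
  · subst hkj
    rw [if_pos rfl]
    induction m with
    | zero => simp
    | succ m ih =>
      have step : ann k * cre k ^ (m + 1)
          = cre k * (cre k ^ m * ann k + (m : ℂ) • cre k ^ (m - 1)) + cre k ^ m := by
        rw [← ih, pow_succ', ← mul_assoc, ann_mul_cre, if_pos rfl, add_mul, one_mul, mul_assoc]
      rw [step, mul_add, ← mul_assoc, ← pow_succ', mul_smul_comm]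
      rcases Nat.eq_zero_or_pos m with hm | hm
      · subst hm; simp
      · have h1 : m - 1 + 1 = m := Nat.succ_pred_eq_of_pos hm
        rw [← pow_succ', h1, add_assoc]
        congr 1
        push_cast
        rw [add_smul, one_smul]
  · simp only [if_neg hkj, zero_smul, add_zero]
    induction m with
    | zero => simp
    | succ m ih =>
      rw [pow_succ', ← mul_assoc, ann_mul_cre, if_neg hkj, add_zero, mul_assoc, ih,
        ← mul_assoc, ← pow_succ']

lemma ann_pow_mul_cre (j k : Fin n) (m : ℕ) :
    ann j ^ m * cre k = cre k * ann j ^ m + (if j = k then (m : ℂ) else 0) • ann j ^ (m - 1) := by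
  by_cases hjk : j = k
  · subst hjk
    rw [if_pos rfl]
    induction m with
    | zero => simp
    | succ m ih =>
      have step : ann j ^ (m + 1) * cre j
          = (cre j * ann j ^ m + (m : ℂ) • ann j ^ (m - 1)) * ann j + ann j ^ m := by
        rw [← ih, pow_succ, mul_assoc, ann_mul_cre, if_pos rfl, mul_add, mul_one, ← mul_assoc]
      rw [step, add_mul, mul_assoc, ← pow_succ, smul_mul_assoc]
      rcases Nat.eq_zero_or_pos m with hm | hm
      · subst hm; simp
      · have h1 : m - 1 + 1 = m := Nat.succ_pred_eq_of_pos hm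
        rw [← pow_succ, h1, add_assoc]
        congr 1
        push_cast
        rw [add_smul, one_smul]
  · simp only [if_neg hjk, zero_smul, add_zero]
    induction m with
    | zero => simp
    | succ m ih =>
      rw [pow_succ, mul_assoc, ann_mul_cre, if_neg hjk, add_zero,
        ← mul_assoc, ih, mul_assoc, ← pow_succ]

lemma ann_mul_prod_cre (k : Fin n) (α : Fin n → ℕ) :
    ∀ l : List (Fin n), l.Nodup → k ∈ l →
    ann k * ((l.map fun j => cre j ^ α j).prod)
      = ((l.map fun j => cre j ^ α j).prod) * ann k
        + (α k : ℂ) • ((l.map fun j => cre j ^ ((α - Pi.single k 1 : Fin n → ℕ) j)).prod) := by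
  intro l
  induction l with
  | nil => intro _ hk; cases hk
  | cons j t ih =>
    intro hl hk
    rcases List.nodup_cons.mp hl with ⟨hjt, hnd⟩
    simp only [List.map_cons, List.prod_cons]
    by_cases hjk : j = k
    · subst hjk
      have hcomm : Commute (ann j) ((t.map fun i => cre i ^ α i).prod) := by
        apply Commute.list_prod_right
        intro y hy
        simp only [List.mem_map] at hy
        obtain ⟨i, hi, rfl⟩ := hy
        have hij : ¬ j = i := fun h => hjt (h ▸ hi)
        have := ann_mul_cre_pow j i (α i)
        rw [if_neg hij, zero_smul, add_zero] at this
        exact this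
      have ht : (t.map fun i => cre i ^ ((α - Pi.single j 1 : Fin n → ℕ) i))
          = t.map fun i => cre i ^ α i := by
        apply List.map_congr_left
        intro i hi
        have hij : i ≠ j := fun h => hjt (h ▸ hi)
        simp [Pi.single_apply, hij]
      rw [ht, ← mul_assoc, ann_mul_cre_pow, if_pos rfl, add_mul, smul_mul_assoc,
        mul_assoc, hcomm.eq, ← mul_assoc]
      congr 2
      simp
    · have hkt : k ∈ t := by
        rcases List.mem_cons.mp hk with h | h
        · exact absurd h.symm hjk
        · exact h
      have hc := ann_mul_cre_pow k j (α j)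
      rw [if_neg (fun h => hjk h.symm), zero_smul, add_zero] at hc
      rw [← mul_assoc, hc, mul_assoc, ih hnd hkt, mul_add, ← mul_assoc, mul_smul_comm]
      congr 2
      simp [Pi.single_apply, hjk]

lemma prod_ann_mul_cre (k : Fin n) (β : Fin n → ℕ) :
    ∀ l : List (Fin n), l.Nodup → k ∈ l →
    ((l.map fun j => ann j ^ β j).prod) * cre k
      = cre k * ((l.map fun j => ann j ^ β j).prod)
        + (β k : ℂ) • ((l.map fun j => ann j ^ ((β - Pi.single k 1 : Fin n → ℕ) j)).prod) := by
  intro l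
  induction l with
  | nil => intro _ hk; cases hk
  | cons j t ih =>
    intro hl hk
    rcases List.nodup_cons.mp hl with ⟨hjt, hnd⟩
    simp only [List.map_cons, List.prod_cons]
    by_cases hjk : j = k
    · subst hjk
      have hcomm : Commute (cre j) ((t.map fun i => ann i ^ β i).prod) := by
        apply Commute.list_prod_right
        intro y hy
        simp only [List.mem_map] at hy
        obtain ⟨i, hi, rfl⟩ := hy
        have hij : ¬ i = j := fun h => hjt (h ▸ hi)
        have := ann_pow_mul_cre i j (β i)
        rw [if_neg hij, zero_smul, add_zero] at this
        exact this.symm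
      have ht : (t.map fun i => ann i ^ ((β - Pi.single j 1 : Fin n → ℕ) i))
          = t.map fun i => ann i ^ β i := by
        apply List.map_congr_left
        intro i hi
        have hij : i ≠ j := fun h => hjt (h ▸ hi)
        simp [Pi.single_apply, hij]
      rw [ht, mul_assoc, ← hcomm.eq, ← mul_assoc, ann_pow_mul_cre, if_pos rfl, add_mul,
        smul_mul_assoc, mul_assoc]
      congr 2
      simp
    · have hkt : k ∈ t := by
        rcases List.mem_cons.mp hk with h | h
        · exact absurd h.symm hjk
        · exact h
      have hc := ann_pow_mul_cre j k (β j)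
      rw [if_neg hjk, zero_smul, add_zero] at hc
      rw [mul_assoc, ih hnd hkt, mul_add, ← mul_assoc, hc, mul_assoc, mul_smul_comm]
      congr 2
      simp [Pi.single_apply, hjk]

/-! ### the four multiplication rules -/

lemma aP_sub_mul (β : Fin n → ℕ) (k : Fin n) :
    aP β * cre k = cre k * aP β + (β k : ℂ) • aP (β - Pi.single k 1) :=
  prod_ann_mul_cre k β (List.finRange n) (List.nodup_finRange n) (List.mem_finRange k)

lemma cP_sub_mul (α : Fin n → ℕ) (k : Fin n) :
    ann k * cP α = cP α * ann k + (α k : ℂ) • cP (α - Pi.single k 1) :=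
  ann_mul_prod_cre k α (List.finRange n) (List.nodup_finRange n) (List.mem_finRange k)

lemma nom_mul_ann (α β : Fin n → ℕ) (k : Fin n) :
    nom α β * ann k = nom α (β + Pi.single k 1) := by
  rw [nom_eq_cP_aP, nom_eq_cP_aP, mul_assoc, aP_mul_ann]

lemma cre_mul_nom (α β : Fin n → ℕ) (k : Fin n) :
    cre k * nom α β = nom (α + Pi.single k 1) β := by
  rw [nom_eq_cP_aP, nom_eq_cP_aP, ← mul_assoc, cre_mul_cP]

lemma nom_mul_cre (α β : Fin n → ℕ) (k : Fin n) :
    nom α β * cre k = nom (α + Pi.single k 1) β + (β k : ℂ) • nom α (β - Pi.single k 1) := by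
  rw [nom_eq_cP_aP, mul_assoc, aP_sub_mul, mul_add, mul_smul_comm, ← mul_assoc, cP_mul_cre,
    ← nom_eq_cP_aP, ← nom_eq_cP_aP]

lemma ann_mul_nom (α β : Fin n → ℕ) (k : Fin n) :
    ann k * nom α β = nom α (β + Pi.single k 1) + (α k : ℂ) • nom (α - Pi.single k 1) β := by
  rw [nom_eq_cP_aP, ← mul_assoc, cP_sub_mul, add_mul, smul_mul_assoc, mul_assoc, ann_mul_aP,
    ← nom_eq_cP_aP, ← nom_eq_cP_aP]
/-! ### degLe via span -/

def degIdx (n : ℕ) (d : ℤ) : Set ((Fin n → ℕ) × (Fin n → ℕ)) :=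
  {γ | ((∑ j, γ.1 j : ℕ) : ℤ) + ((∑ j, γ.2 j : ℕ) : ℤ) ≤ d}

lemma degLe_iff_mem_span (x : Weyl n) (d : ℤ) :
    degLe x d ↔ x ∈ Submodule.span ℂ
      ((fun γ : (Fin n → ℕ) × (Fin n → ℕ) => nom γ.1 γ.2) '' degIdx n d) := by
  rw [Finsupp.mem_span_image_iff_linearCombination]
  constructor
  · rintro ⟨c, hx, hs⟩
    refine ⟨c, (Finsupp.mem_supported ℂ c).mpr (fun γ hγ => hs γ hγ), ?_⟩
    rw [Finsupp.linearCombination_apply]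
    exact hx.symm
  · rintro ⟨c, hc, hx⟩
    refine ⟨c, ?_, fun γ hγ => (Finsupp.mem_supported ℂ c).mp hc hγ⟩
    rw [← hx, Finsupp.linearCombination_apply]

lemma degLe_zero (d : ℤ) : degLe (0 : Weyl n) d :=
  (degLe_iff_mem_span 0 d).mpr (Submodule.zero_mem _)

lemma degLe_add {x y : Weyl n} {d : ℤ} (hx : degLe x d) (hy : degLe y d) :
    degLe (x + y) d := by
  rw [degLe_iff_mem_span] at *
  exact Submodule.add_mem _ hx hy

lemma degLe_smul {x : Weyl n} {d : ℤ} (c : ℂ) (hx : degLe x d) : degLe (c • x) d := by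
  rw [degLe_iff_mem_span] at *
  exact Submodule.smul_mem _ _ hx

lemma degLe_neg {x : Weyl n} {d : ℤ} (hx : degLe x d) : degLe (-x) d := by
  rw [degLe_iff_mem_span] at *
  exact Submodule.neg_mem _ hx

lemma degLe_sub {x y : Weyl n} {d : ℤ} (hx : degLe x d) (hy : degLe y d) :
    degLe (x - y) d := by
  rw [sub_eq_add_neg]; exact degLe_add hx (degLe_neg hy)

lemma degLe_mono {x : Weyl n} {d d' : ℤ} (h : d ≤ d') (hx : degLe x d) : degLe x d' := by
  rw [degLe_iff_mem_span] at *
  refine Submodule.span_mono (Set.image_mono ?_) hx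
  intro γ hγ
  exact le_trans hγ h

lemma degLe_nom {α β : Fin n → ℕ} {d : ℤ}
    (h : ((∑ j, α j : ℕ) : ℤ) + ((∑ j, β j : ℕ) : ℤ) ≤ d) : degLe (nom α β) d := by
  rw [degLe_iff_mem_span]
  exact Submodule.subset_span ⟨(α, β), h, rfl⟩

lemma degLe_sum {s : Finset (Fin n)} {f : Fin n → Weyl n} {d : ℤ}
    (h : ∀ k ∈ s, degLe (f k) d) : degLe (∑ k ∈ s, f k) d := by
  rw [degLe_iff_mem_span]
  exact Submodule.sum_mem _ (fun k hk => (degLe_iff_mem_span (f k) d).mp (h k hk))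

lemma degLe_eq_zero {x : Weyl n} {d : ℤ} (hd : d < 0) (hx : degLe x d) : x = 0 := by
  rw [degLe_iff_mem_span] at hx
  have : (fun γ : (Fin n → ℕ) × (Fin n → ℕ) => nom γ.1 γ.2) '' degIdx n d = ∅ := by
    rw [Set.image_eq_empty]
    apply Set.eq_empty_iff_forall_notMem.mpr
    intro γ hγ
    have h1 : (0 : ℤ) ≤ ((∑ j, γ.1 j : ℕ) : ℤ) + ((∑ j, γ.2 j : ℕ) : ℤ) := by positivity
    exact absurd (le_trans h1 hγ) (not_le.mpr hd)
  rw [this, Submodule.span_empty, Submodule.mem_bot] at hx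
  exact hx

/-- span-induction principle tailored to `degLe`. -/
lemma degLe_induction {d : ℤ} {P : Weyl n → Prop}
    (hnom : ∀ α β : Fin n → ℕ, ((∑ j, α j : ℕ) : ℤ) + ((∑ j, β j : ℕ) : ℤ) ≤ d → P (nom α β))
    (hzero : P 0) (hadd : ∀ x y, P x → P y → P (x + y))
    (hsmul : ∀ (c : ℂ) x, P x → P (c • x)) :
    ∀ x : Weyl n, degLe x d → P x := by
  intro x hx
  rw [degLe_iff_mem_span] at hx
  induction hx using Submodule.span_induction with
  | mem y hy =>
    obtain ⟨γ, hγ, rfl⟩ := hy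
    exact hnom γ.1 γ.2 hγ
  | zero => exact hzero
  | add a b _ _ ha hb => exact hadd a b ha hb
  | smul c a _ ha => exact hsmul c a ha

/-! ### canonical words for nom -/

def LF (α : Fin n → ℕ) : List (Fin n) :=
  (List.finRange n).flatMap fun j => List.replicate (α j) j

lemma count_LF (α : Fin n → ℕ) (k : Fin n) : (LF α).count k = α k := by
  rw [LF, List.count_flatMap]
  have : ((List.finRange n).map (List.count k ∘ fun j => List.replicate (α j) j))
      = (List.finRange n).map fun j => if j = k then α j else 0 := by
    apply List.map_congr_left
    intro j _
    simp only [Function.comp_apply, List.count_replicate]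
    by_cases h : j = k <;> simp [h]
  rw [this, ← Fin.sum_univ_def, Finset.sum_ite_eq' Finset.univ k]
  simp

lemma length_LF (α : Fin n → ℕ) : (LF α).length = ∑ j, α j := by
  rw [LF, List.length_flatMap]
  have : ((List.finRange n).map (List.length ∘ fun j => List.replicate (α j) j))
      = (List.finRange n).map α := by
    apply List.map_congr_left
    intro j _
    simp
  rw [show (List.map (fun a => (List.replicate (α a) a).length) (List.finRange n)) = _ from this,
    ← Fin.sum_univ_def]

lemma cre_pow_word (j : Fin n) (m : ℕ) :
    cre j ^ m = word (List.replicate m (Sum.inr j)) := by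
  induction m with
  | zero => simp
  | succ m ih => rw [pow_succ', List.replicate_succ, word_cons, gen_inr, ih]

lemma ann_pow_word (j : Fin n) (m : ℕ) :
    ann j ^ m = word (List.replicate m (Sum.inl j)) := by
  induction m with
  | zero => simp
  | succ m ih => rw [pow_succ', List.replicate_succ, word_cons, gen_inl, ih]

lemma cP_word (α : Fin n → ℕ) : cP α = word ((LF α).map Sum.inr) := by
  rw [cP, LF, List.map_flatMap]
  induction (List.finRange n) with
  | nil => simp [word]
  | cons j t ih =>
    rw [List.map_cons, List.prod_cons, List.flatMap_cons, word_append, ih,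
      List.map_replicate, ← cre_pow_word]

lemma aP_word (β : Fin n → ℕ) : aP β = word ((LF β).map Sum.inl) := by
  rw [aP, LF, List.map_flatMap]
  induction (List.finRange n) with
  | nil => simp [word]
  | cons j t ih =>
    rw [List.map_cons, List.prod_cons, List.flatMap_cons, word_append, ih,
      List.map_replicate, ← ann_pow_word]

lemma nom_word (α β : Fin n → ℕ) :
    nom α β = word (((LF α).map Sum.inr) ++ ((LF β).map Sum.inl)) := by
  rw [nom_eq_cP_aP, word_append, cP_word, aP_word]
/-! ### degree bookkeeping -/

def Sg (α β : Fin n → ℕ) : ℤ := ((∑ j, α j : ℕ) : ℤ) + ((∑ j, β j : ℕ) : ℤ)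

lemma degLe_nom' (α β : Fin n → ℕ) : degLe (nom α β) (Sg α β) := degLe_nom le_rfl

lemma degLe_nom'' {α β : Fin n → ℕ} {d : ℤ} (h : Sg α β ≤ d) : degLe (nom α β) d :=
  degLe_nom h

lemma sum_add_single (β : Fin n → ℕ) (k : Fin n) :
    (∑ j, (β + Pi.single k 1 : Fin n → ℕ) j) = (∑ j, β j) + 1 := by
  simp [Finset.sum_add_distrib, Finset.sum_pi_single']

lemma Sg_add_single_left (α β : Fin n → ℕ) (k : Fin n) :
    Sg (α + Pi.single k 1) β = Sg α β + 1 := by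
  rw [Sg, Sg, sum_add_single]; push_cast; ring

lemma Sg_add_single_right (α β : Fin n → ℕ) (k : Fin n) :
    Sg α (β + Pi.single k 1) = Sg α β + 1 := by
  rw [Sg, Sg, sum_add_single]; push_cast; ring

lemma sum_sub_single {β : Fin n → ℕ} {k : Fin n} (h : β k ≠ 0) :
    ((∑ j, (β - Pi.single k 1 : Fin n → ℕ) j : ℕ) : ℤ) = ((∑ j, β j : ℕ) : ℤ) - 1 := by
  have h1 : (β - Pi.single k 1 : Fin n → ℕ) k
        + ∑ j ∈ Finset.univ.erase k, (β - Pi.single k 1 : Fin n → ℕ) j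
      = ∑ j, (β - Pi.single k 1 : Fin n → ℕ) j :=
    Finset.add_sum_erase Finset.univ _ (Finset.mem_univ k)
  have h2 : β k + ∑ j ∈ Finset.univ.erase k, β j = ∑ j, β j :=
    Finset.add_sum_erase Finset.univ β (Finset.mem_univ k)
  have h3 : ∑ j ∈ Finset.univ.erase k, (β - Pi.single k 1 : Fin n → ℕ) j
      = ∑ j ∈ Finset.univ.erase k, β j := by
    apply Finset.sum_congr rfl
    intro j hj
    simp [Pi.single_apply, (Finset.mem_erase.mp hj).1]
  have h4 : (β - Pi.single k 1 : Fin n → ℕ) k = β k - 1 := by simp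
  omega

lemma sum_sub_single_le (β : Fin n → ℕ) (k : Fin n) :
    (∑ j, (β - Pi.single k 1 : Fin n → ℕ) j) ≤ ∑ j, β j :=
  Finset.sum_le_sum fun j _ => tsub_le_self

lemma Sg_sub_single_left_le (α β : Fin n → ℕ) (k : Fin n) :
    Sg (α - Pi.single k 1) β ≤ Sg α β := by
  rw [Sg, Sg]
  have := sum_sub_single_le α k
  omega

lemma Sg_sub_single_right_le (α β : Fin n → ℕ) (k : Fin n) :
    Sg α (β - Pi.single k 1) ≤ Sg α β := by
  rw [Sg, Sg]
  have := sum_sub_single_le β k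
  omega

lemma sum_add_fun (α γ : Fin n → ℕ) :
    (∑ j, (α + γ : Fin n → ℕ) j) = (∑ j, α j) + ∑ j, γ j := by
  simp [Finset.sum_add_distrib]

/-! ### multidegree of words -/

lemma mdegC_nil : mdegC ([] : List (Fin n ⊕ Fin n)) = 0 := by
  funext j; simp [mdegC]

lemma mdegA_nil : mdegA ([] : List (Fin n ⊕ Fin n)) = 0 := by
  funext j; simp [mdegA]

lemma mdegC_cons_inl (k : Fin n) (t : List (Fin n ⊕ Fin n)) :
    mdegC (Sum.inl k :: t) = mdegC t := by
  funext j
  show List.count (Sum.inr j) (Sum.inl k :: t) = List.count (Sum.inr j) t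
  rw [List.count_cons, show ((Sum.inl k : Fin n ⊕ Fin n) == Sum.inr j) = false from rfl]
  simp

lemma mdegA_cons_inr (k : Fin n) (t : List (Fin n ⊕ Fin n)) :
    mdegA (Sum.inr k :: t) = mdegA t := by
  funext j
  show List.count (Sum.inl j) (Sum.inr k :: t) = List.count (Sum.inl j) t
  rw [List.count_cons, show ((Sum.inr k : Fin n ⊕ Fin n) == Sum.inl j) = false from rfl]
  simp

lemma mdegC_cons_inr (k : Fin n) (t : List (Fin n ⊕ Fin n)) :
    mdegC (Sum.inr k :: t) = mdegC t + Pi.single k 1 := by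
  funext j
  show List.count (Sum.inr j) (Sum.inr k :: t) = mdegC t j + (Pi.single k 1 : Fin n → ℕ) j
  rw [List.count_cons, show ((Sum.inr k : Fin n ⊕ Fin n) == Sum.inr j) = decide (k = j) from rfl]
  by_cases h : j = k
  · subst h; simp [mdegC]
  · simp [mdegC, Pi.single_apply, h, Ne.symm h]

lemma mdegA_cons_inl (k : Fin n) (t : List (Fin n ⊕ Fin n)) :
    mdegA (Sum.inl k :: t) = mdegA t + Pi.single k 1 := by
  funext j
  show List.count (Sum.inl j) (Sum.inl k :: t) = mdegA t j + (Pi.single k 1 : Fin n → ℕ) j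
  rw [List.count_cons, show ((Sum.inl k : Fin n ⊕ Fin n) == Sum.inl j) = decide (k = j) from rfl]
  by_cases h : j = k
  · subst h; simp [mdegA]
  · simp [mdegA, Pi.single_apply, h, Ne.symm h]

lemma length_eq_mdeg (w : List (Fin n ⊕ Fin n)) :
    w.length = (∑ j, mdegC w j) + ∑ j, mdegA w j := by
  induction w with
  | nil => simp [mdegC, mdegA]
  | cons a t ih =>
    match a with
    | Sum.inl k =>
      rw [List.length_cons, mdegC_cons_inl, mdegA_cons_inl, sum_add_single, ih]
      omega
    | Sum.inr k =>
      rw [List.length_cons, mdegC_cons_inr, mdegA_cons_inr, sum_add_single, ih]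
      omega

/-! ### the fundamental normal ordering lemma (top term) -/

lemma nom_mul_word_expand : ∀ (l : List (Fin n ⊕ Fin n)) (α β : Fin n → ℕ),
    degLe (nom α β * word l - nom (α + mdegC l) (β + mdegA l))
      (Sg α β + l.length - 2) := by
  intro l
  induction l with
  | nil =>
    intro α β
    rw [mdegC_nil, mdegA_nil, add_zero, add_zero, word_nil, mul_one, sub_self]
    exact degLe_zero _
  | cons a t ih =>
    intro α β
    match a with
    | Sum.inl k =>
      rw [word_cons, gen_inl, ← mul_assoc, nom_mul_ann, mdegC_cons_inl, mdegA_cons_inl]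
      have h2 : β + (mdegA t + Pi.single k 1) = (β + Pi.single k 1) + mdegA t := by
        rw [← add_assoc, add_right_comm]
      rw [h2]
      refine degLe_mono ?_ (ih α (β + Pi.single k 1))
      rw [Sg_add_single_right, List.length_cons]
      omega
    | Sum.inr k =>
      rw [word_cons, gen_inr, ← mul_assoc, nom_mul_cre, add_mul, smul_mul_assoc,
        mdegC_cons_inr, mdegA_cons_inr]
      have h1 : α + (mdegC t + Pi.single k 1) = (α + Pi.single k 1) + mdegC t := by
        rw [← add_assoc, add_right_comm]
      rw [h1, add_sub_right_comm]
      apply degLe_add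
      · refine degLe_mono ?_ (ih (α + Pi.single k 1) β)
        rw [Sg_add_single_left, List.length_cons]
        push_cast
        omega
      · by_cases hb : β k = 0
        · rw [hb, Nat.cast_zero, zero_smul]
          exact degLe_zero _
        · apply degLe_smul
          rw [show nom α (β - Pi.single k 1) * word t
              = (nom α (β - Pi.single k 1) * word t
                  - nom (α + mdegC t) ((β - Pi.single k 1) + mdegA t))
                + nom (α + mdegC t) ((β - Pi.single k 1) + mdegA t) by rw [sub_add_cancel]]
          apply degLe_add
          · refine degLe_mono ?_ (ih α (β - Pi.single k 1))
            have h3 := Sg_sub_single_right_le α β k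
            rw [List.length_cons]
            push_cast
            omega
          · apply degLe_nom''
            rw [Sg]
            rw [sum_add_fun, sum_add_fun]
            have h4 := sum_sub_single hb
            have h5 := length_eq_mdeg t
            rw [Sg, List.length_cons]
            omega

lemma degLe_nom_mul_word (α β : Fin n → ℕ) (l : List (Fin n ⊕ Fin n)) :
    degLe (nom α β * word l) (Sg α β + l.length) := by
  rw [show nom α β * word l
      = (nom α β * word l - nom (α + mdegC l) (β + mdegA l))
        + nom (α + mdegC l) (β + mdegA l) by rw [sub_add_cancel]]
  apply degLe_add
  · exact degLe_mono (by omega) (nom_mul_word_expand l α β)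
  · apply degLe_nom''
    rw [Sg, sum_add_fun, sum_add_fun]
    have h5 := length_eq_mdeg l
    rw [Sg]
    omega

lemma degLe_mul_word {x : Weyl n} {d : ℤ} (hx : degLe x d) (l : List (Fin n ⊕ Fin n)) :
    degLe (x * word l) (d + l.length) := by
  refine degLe_induction (P := fun x => degLe (x * word l) (d + l.length)) ?_ ?_ ?_ ?_ x hx
  · intro α β h
    exact degLe_mono (by rw [← Sg] at h; omega) (degLe_nom_mul_word α β l)
  · simp only [zero_mul]; exact degLe_zero _
  · intro a b ha hb; simp only [add_mul]; exact degLe_add ha hb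
  · intro c a ha; simp only [smul_mul_assoc]; exact degLe_smul c ha

lemma length_nom_word (α β : Fin n → ℕ) :
    ((((LF α).map Sum.inr) ++ ((LF β).map Sum.inl)).length : ℤ) = Sg α β := by
  rw [List.length_append, List.length_map, List.length_map, length_LF, length_LF, Sg]
  push_cast
  ring

lemma degLe_mul {x y : Weyl n} {d e : ℤ} (hx : degLe x d) (hy : degLe y e) :
    degLe (x * y) (d + e) := by
  refine degLe_induction (P := fun y => degLe (x * y) (d + e)) ?_ ?_ ?_ ?_ y hy
  · intro α β h
    rw [nom_word]
    refine degLe_mono ?_ (degLe_mul_word hx _)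
    rw [length_nom_word, ← Sg] at *
    omega
  · simp only [mul_zero]; exact degLe_zero _
  · intro a b ha hb; simp only [mul_add]; exact degLe_add ha hb
  · intro c a ha; simp only [mul_smul_comm]; exact degLe_smul c ha

/-! ### commutators -/

lemma comm_ann_nom (k : Fin n) (α β : Fin n → ℕ) :
    comm (ann k) (nom α β) = (α k : ℂ) • nom (α - Pi.single k 1) β := by
  rw [comm, ann_mul_nom, nom_mul_ann, add_sub_cancel_left]

lemma comm_cre_nom (k : Fin n) (α β : Fin n → ℕ) :
    comm (cre k) (nom α β) = (-(β k : ℂ)) • nom α (β - Pi.single k 1) := by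
  rw [comm, cre_mul_nom, nom_mul_cre, sub_add_cancel_left]
  exact (neg_smul (β k : ℂ) (nom α (β - Pi.single k 1))).symm

lemma degLe_gen_mul {x : Weyl n} {d : ℤ} (hx : degLe x d) (a : Fin n ⊕ Fin n) :
    degLe (gen a * x) (d + 1) := by
  refine degLe_induction (P := fun x => degLe (gen a * x) (d + 1)) ?_ ?_ ?_ ?_ x hx
  · intro α β h
    rw [← Sg] at h
    match a with
    | Sum.inl k =>
      rw [gen_inl, ann_mul_nom]
      apply degLe_add
      · exact degLe_nom'' (by rw [Sg_add_single_right]; omega)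
      · exact degLe_smul _ (degLe_nom'' (le_trans (Sg_sub_single_left_le α β k) (by omega)))
    | Sum.inr k =>
      rw [gen_inr, cre_mul_nom]
      exact degLe_nom'' (by rw [Sg_add_single_left]; omega)
  · simp only [mul_zero]; exact degLe_zero _
  · intro u v hu hv; simp only [mul_add]; exact degLe_add hu hv
  · intro c u hu; simp only [mul_smul_comm]; exact degLe_smul c hu

lemma comm_mul_left (x y z : Weyl n) :
    comm (x * y) z = x * comm y z + comm x z * y := by
  simp only [comm, mul_sub, sub_mul, ← mul_assoc]
  abel

lemma comm_add_left (x y z : Weyl n) : comm (x + y) z = comm x z + comm y z := by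
  simp only [comm]; noncomm_ring

lemma comm_add_right (x y z : Weyl n) : comm x (y + z) = comm x y + comm x z := by
  simp only [comm]; noncomm_ring

lemma comm_smul_left (c : ℂ) (x z : Weyl n) : comm (c • x) z = c • comm x z := by
  simp only [comm, smul_mul_assoc, mul_smul_comm, smul_sub]

lemma comm_smul_right (c : ℂ) (x z : Weyl n) : comm x (c • z) = c • comm x z := by
  simp only [comm, smul_mul_assoc, mul_smul_comm, smul_sub]

lemma comm_zero_left (z : Weyl n) : comm 0 z = 0 := by simp [comm]

lemma comm_zero_right (z : Weyl n) : comm z 0 = 0 := by simp [comm]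

lemma degLe_comm_word_nom : ∀ (l : List (Fin n ⊕ Fin n)) (α' β' : Fin n → ℕ),
    degLe (comm (word l) (nom α' β')) ((l.length : ℤ) + Sg α' β' - 2) := by
  intro l
  induction l with
  | nil =>
    intro α' β'
    have : comm (word ([] : List (Fin n ⊕ Fin n))) (nom α' β') = 0 := by
      simp [comm, word_nil]
    rw [this]; exact degLe_zero _
  | cons a t ih =>
    intro α' β'
    rw [word_cons, comm_mul_left]
    apply degLe_add
    · refine degLe_mono ?_ (degLe_gen_mul (ih α' β') a)
      rw [List.length_cons]; omega
    · match a with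
      | Sum.inl k =>
        rw [gen_inl, comm_ann_nom, smul_mul_assoc]
        by_cases hb : α' k = 0
        · rw [hb, Nat.cast_zero, zero_smul]; exact degLe_zero _
        · apply degLe_smul
          have hw : word t = word t := rfl
          have := degLe_nom_mul_word (α' - Pi.single k 1) β' t
          refine degLe_mono ?_ this
          rw [Sg, Sg, sum_sub_single hb, List.length_cons]
          omega
      | Sum.inr k =>
        rw [gen_inr, comm_cre_nom, smul_mul_assoc]
        by_cases hb : β' k = 0
        · rw [hb, Nat.cast_zero, neg_zero, zero_smul]; exact degLe_zero _
        · apply degLe_smul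
          have := degLe_nom_mul_word α' (β' - Pi.single k 1) t
          refine degLe_mono ?_ this
          rw [Sg, Sg, sum_sub_single hb, List.length_cons]
          omega

lemma degLe_comm {x y : Weyl n} {d e : ℤ} (hx : degLe x d) (hy : degLe y e) :
    degLe (comm x y) (d + e - 2) := by
  refine degLe_induction (P := fun y => degLe (comm x y) (d + e - 2)) ?_ ?_ ?_ ?_ y hy
  · intro α' β' h
    rw [← Sg] at h
    refine degLe_induction (P := fun x => degLe (comm x (nom α' β')) (d + e - 2)) ?_ ?_ ?_ ?_ x hx
    · intro α β h2
      rw [← Sg] at h2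
      rw [nom_word α β]
      refine degLe_mono ?_ (degLe_comm_word_nom _ α' β')
      rw [length_nom_word]
      omega
    · simp only [comm_zero_left]; exact degLe_zero _
    · intro u v hu hv; simp only [comm_add_left]; exact degLe_add hu hv
    · intro c u hu; simp only [comm_smul_left]; exact degLe_smul c hu
  · simp only [comm_zero_right]; exact degLe_zero _
  · intro u v hu hv; simp only [comm_add_right]; exact degLe_add hu hv
  · intro c u hu; simp only [comm_smul_right]; exact degLe_smul c hu
/-! ### counts for Fin-lists -/

lemma count_cons_fin (k : Fin n) (t : List (Fin n)) :
    (fun j => (k :: t).count j) = (fun j => t.count j) + Pi.single k 1 := by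
  funext j
  show List.count j (k :: t) = t.count j + (Pi.single k 1 : Fin n → ℕ) j
  rw [List.count_cons, show (k == j) = decide (k = j) from rfl]
  by_cases h : j = k
  · subst h; simp
  · simp [Pi.single_apply, h, Ne.symm h]

lemma countfun_LF (α : Fin n → ℕ) : (fun k => (LF α).count k) = α :=
  funext fun k => count_LF α k

lemma count_inr_map_inr (j : Fin n) (t : List (Fin n)) :
    List.count (Sum.inr j) (t.map (Sum.inr : Fin n → Fin n ⊕ Fin n)) = t.count j := by
  induction t with
  | nil => rfl
  | cons a s ih =>
    rw [List.map_cons, List.count_cons, List.count_cons, ih,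
      show ((Sum.inr a : Fin n ⊕ Fin n) == Sum.inr j) = (a == j) from rfl]

lemma count_inl_map_inl (j : Fin n) (t : List (Fin n)) :
    List.count (Sum.inl j) (t.map (Sum.inl : Fin n → Fin n ⊕ Fin n)) = t.count j := by
  induction t with
  | nil => rfl
  | cons a s ih =>
    rw [List.map_cons, List.count_cons, List.count_cons, ih,
      show ((Sum.inl a : Fin n ⊕ Fin n) == Sum.inl j) = (a == j) from rfl]

lemma count_inr_map_inl (j : Fin n) (t : List (Fin n)) :
    List.count (Sum.inr j) (t.map (Sum.inl : Fin n → Fin n ⊕ Fin n)) = 0 := by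
  induction t with
  | nil => rfl
  | cons a s ih =>
    rw [List.map_cons, List.count_cons, ih,
      show ((Sum.inl a : Fin n ⊕ Fin n) == Sum.inr j) = false from rfl]
    simp

lemma count_inl_map_inr (j : Fin n) (t : List (Fin n)) :
    List.count (Sum.inl j) (t.map (Sum.inr : Fin n → Fin n ⊕ Fin n)) = 0 := by
  induction t with
  | nil => rfl
  | cons a s ih =>
    rw [List.map_cons, List.count_cons, ih,
      show ((Sum.inr a : Fin n ⊕ Fin n) == Sum.inl j) = false from rfl]
    simp

lemma mdegC_mixed (t l₂ : List (Fin n)) :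
    mdegC (t.map Sum.inr ++ l₂.map Sum.inl) = fun j => t.count j := by
  funext j
  show List.count (Sum.inr j) _ = _
  rw [List.count_append, count_inr_map_inr, count_inr_map_inl, add_zero]

lemma mdegA_mixed (t l₂ : List (Fin n)) :
    mdegA (t.map Sum.inr ++ l₂.map Sum.inl) = fun j => l₂.count j := by
  funext j
  show List.count (Sum.inl j) _ = _
  rw [List.count_append, count_inl_map_inl, count_inl_map_inr, zero_add]

lemma nom_mul_annword (α : Fin n → ℕ) : ∀ (l₂ : List (Fin n)) (β : Fin n → ℕ),
    nom α β * word (l₂.map Sum.inl) = nom α (β + fun k => l₂.count k) := by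
  intro l₂
  induction l₂ with
  | nil =>
    intro β
    have h0 : (fun k => ([] : List (Fin n)).count k) = (0 : Fin n → ℕ) := by
      funext k; simp
    rw [h0, add_zero, List.map_nil, word_nil, mul_one]
  | cons k t ih =>
    intro β
    rw [List.map_cons, word_cons, gen_inl, ← mul_assoc, nom_mul_ann, ih, count_cons_fin,
      ← add_assoc, add_right_comm]

/-! ### algebraic step for the refined expansion -/

lemma sum_coeff_split (β C : Fin n → ℕ) (k : Fin n) (v : Fin n → Weyl n) :
    (∑ j, ((β j * (C + Pi.single k 1 : Fin n → ℕ) j : ℕ) : ℂ) • v j)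
      = (∑ j, ((β j * C j : ℕ) : ℂ) • v j) + ((β k : ℕ) : ℂ) • v k := by
  have step : ∀ j : Fin n, ((β j * (C + Pi.single k 1 : Fin n → ℕ) j : ℕ) : ℂ) • v j
      = ((β j * C j : ℕ) : ℂ) • v j + (if j = k then ((β j : ℕ) : ℂ) • v j else 0) := by
    intro j
    by_cases h : j = k
    · subst h
      rw [if_pos rfl, ← add_smul]
      congr 1
      simp only [Pi.add_apply, Pi.single_eq_same]
      push_cast
      ring
    · rw [if_neg h, add_zero]
      congr 2
      simp [Pi.single_apply, h]
  rw [Finset.sum_congr rfl (fun j _ => step j), Finset.sum_add_distrib,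
    Finset.sum_ite_eq' Finset.univ k, if_pos (Finset.mem_univ k)]

lemma expand_step (α β C A : Fin n → ℕ) (k : Fin n) (W : Weyl n) :
    (nom (α + Pi.single k 1) β * W + ((β k : ℕ) : ℂ) • (nom α (β - Pi.single k 1) * W))
        - nom (α + (C + Pi.single k 1)) (β + A)
        - ∑ j : Fin n, ((β j * (C + Pi.single k 1 : Fin n → ℕ) j : ℕ) : ℂ) •
            nom ((α + (C + Pi.single k 1)) - Pi.single j 1) ((β + A) - Pi.single j 1)
      = (nom (α + Pi.single k 1) β * W - nom ((α + Pi.single k 1) + C) (β + A)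
          - ∑ j : Fin n, ((β j * C j : ℕ) : ℂ) •
              nom (((α + Pi.single k 1) + C) - Pi.single j 1) ((β + A) - Pi.single j 1))
        + (((β k : ℕ) : ℂ) • (nom α (β - Pi.single k 1) * W)
            - ((β k : ℕ) : ℂ) • nom (α + C) ((β + A) - Pi.single k 1)) := by
  have f1 : α + (C + Pi.single k 1) = (α + Pi.single k 1) + C := by
    rw [← add_assoc, add_right_comm]
  have f3 : ((α + Pi.single k 1) + C) - Pi.single k 1 = α + C := by
    funext j
    by_cases h : j = k
    · subst h; simp
    · simp [Pi.single_apply, h]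
  rw [f1]
  simp only [sum_coeff_split β C k
    (fun j => nom (((α + Pi.single k 1) + C) - Pi.single j 1) ((β + A) - Pi.single j 1))]
  rw [f3]
  abel

/-! ### the refined expansion -/

lemma nom_mul_word_expand2 (l₂ : List (Fin n)) (β : Fin n → ℕ) :
    ∀ (l₁ : List (Fin n)) (α : Fin n → ℕ),
    degLe (nom α β * word (l₁.map Sum.inr ++ l₂.map Sum.inl)
        - nom (α + fun j => l₁.count j) (β + fun j => l₂.count j)
        - ∑ k : Fin n, ((β k * l₁.count k : ℕ) : ℂ) •
            nom ((α + fun j => l₁.count j) - Pi.single k 1)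
                ((β + fun j => l₂.count j) - Pi.single k 1))
      (Sg α β + l₁.length + l₂.length - 4) := by
  intro l₁
  induction l₁ with
  | nil =>
    intro α
    have h0 : (fun k => ([] : List (Fin n)).count k) = (0 : Fin n → ℕ) := by funext k; simp
    have hs : (∑ k : Fin n, ((β k * ([] : List (Fin n)).count k : ℕ) : ℂ) •
        nom ((α + fun j => ([] : List (Fin n)).count j) - Pi.single k 1)
            ((β + fun j => l₂.count j) - Pi.single k 1)) = 0 := by
      apply Finset.sum_eq_zero
      intro k _
      simp
    rw [hs, sub_zero, List.map_nil, List.nil_append, nom_mul_annword, h0, add_zero, sub_self]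
    exact degLe_zero _
  | cons k t ih =>
    intro α
    have hw : word (((k :: t).map Sum.inr) ++ l₂.map Sum.inl)
        = cre k * word ((t.map Sum.inr) ++ l₂.map Sum.inl) := by
      rw [List.map_cons, List.cons_append, word_cons, gen_inr]
    rw [hw, ← mul_assoc, nom_mul_cre, add_mul, smul_mul_assoc, count_cons_fin]
    have hco : ∀ j : Fin n, List.count j (k :: t)
        = ((fun i => t.count i) + Pi.single k 1 : Fin n → ℕ) j :=
      fun j => congrFun (count_cons_fin k t) j
    have hsum : (∑ j : Fin n, ((β j * List.count j (k :: t) : ℕ) : ℂ) •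
            nom ((α + ((fun i => t.count i) + Pi.single k 1)) - Pi.single j 1)
                ((β + fun i => l₂.count i) - Pi.single j 1))
        = ∑ j : Fin n, ((β j * ((fun i => t.count i) + Pi.single k 1 : Fin n → ℕ) j : ℕ) : ℂ) •
            nom ((α + ((fun i => t.count i) + Pi.single k 1)) - Pi.single j 1)
                ((β + fun i => l₂.count i) - Pi.single j 1) :=
      Finset.sum_congr rfl (fun j _ => by rw [hco j])
    rw [hsum, expand_step α β (fun j => t.count j) (fun j => l₂.count j) k
        (word ((t.map Sum.inr) ++ l₂.map Sum.inl))]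
    apply degLe_add
    · refine degLe_mono ?_ (ih (α + Pi.single k 1))
      rw [Sg_add_single_left, List.length_cons]
      omega
    · by_cases hb : β k = 0
      · rw [hb]
        simp only [Nat.cast_zero, zero_smul, sub_zero, sub_self]
        exact degLe_zero _
      · have heq : ((β k : ℕ) : ℂ) • (nom α (β - Pi.single k 1)
              * word (t.map Sum.inr ++ l₂.map Sum.inl))
            - ((β k : ℕ) : ℂ) • nom (α + fun j => t.count j)
                ((β + fun j => l₂.count j) - Pi.single k 1)
            = ((β k : ℕ) : ℂ) • ((nom α (β - Pi.single k 1)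
                * word (t.map Sum.inr ++ l₂.map Sum.inl))
              - nom (α + fun j => t.count j)
                  ((β + fun j => l₂.count j) - Pi.single k 1)) := (smul_sub ((β k : ℕ) : ℂ) _ _).symm
        rw [heq]
        apply degLe_smul
        have hQ := nom_mul_word_expand (t.map Sum.inr ++ l₂.map Sum.inl) α (β - Pi.single k 1)
        rw [mdegC_mixed, mdegA_mixed] at hQ
        have f4 : (β - Pi.single k 1) + (fun j => l₂.count j)
            = (β + fun j => l₂.count j) - Pi.single k 1 := by
          funext j
          by_cases h : j = k
          · subst h
            simp only [Pi.add_apply, Pi.sub_apply, Pi.single_eq_same]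
            omega
          · simp [Pi.single_apply, h]
        rw [f4] at hQ
        simp only [List.length_append, List.length_map] at hQ
        refine degLe_mono ?_ hQ
        have h4 := sum_sub_single hb
        simp only [Sg, List.length_cons]
        omega

/-! ### product of two noms -/

lemma nom_mul_nom_expand (α β α' β' : Fin n → ℕ) :
    degLe (nom α β * nom α' β' - nom (α + α') (β + β')
        - ∑ k : Fin n, ((β k * α' k : ℕ) : ℂ) •
            nom ((α + α') - Pi.single k 1) ((β + β') - Pi.single k 1))
      (Sg α β + Sg α' β' - 4) := by
  have h := nom_mul_word_expand2 (LF β') β (LF α') α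
  simp only [count_LF] at h
  rw [← nom_word] at h
  refine degLe_mono ?_ h
  rw [length_LF, length_LF]
  simp only [Sg]
  omega

lemma Sg_comm (α β : Fin n → ℕ) : Sg α β = Sg β α := by
  rw [Sg, Sg]; omega

/-! ### the core commutator -/

lemma comm_nom_nom_expand (α β : Fin n → ℕ) :
    degLe (comm (nom α β) (nom β α)
        - ∑ k : Fin n, (((β k : ℕ) : ℂ) ^ 2 - ((α k : ℕ) : ℂ) ^ 2) •
            nom ((α + β) - Pi.single k 1) ((α + β) - Pi.single k 1))
      (2 * Sg α β - 4) := by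
  have h1 := nom_mul_nom_expand α β β α
  have h2 := nom_mul_nom_expand β α α β
  rw [add_comm β α] at h2
  have key : comm (nom α β) (nom β α)
        - ∑ k : Fin n, (((β k : ℕ) : ℂ) ^ 2 - ((α k : ℕ) : ℂ) ^ 2) •
            nom ((α + β) - Pi.single k 1) ((α + β) - Pi.single k 1)
      = (nom α β * nom β α - nom (α + β) (β + α)
          - ∑ k : Fin n, ((β k * β k : ℕ) : ℂ) •
              nom ((α + β) - Pi.single k 1) ((β + α) - Pi.single k 1))
        - (nom β α * nom α β - nom (α + β) (α + β)
          - ∑ k : Fin n, ((α k * α k : ℕ) : ℂ) •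
              nom ((α + β) - Pi.single k 1) ((α + β) - Pi.single k 1)) := by
    rw [comm, add_comm β α]
    have hsum : (∑ k : Fin n, (((β k : ℕ) : ℂ) ^ 2 - ((α k : ℕ) : ℂ) ^ 2) •
            nom ((α + β) - Pi.single k 1) ((α + β) - Pi.single k 1))
        = (∑ k : Fin n, ((β k * β k : ℕ) : ℂ) •
              nom ((α + β) - Pi.single k 1) ((α + β) - Pi.single k 1))
          - ∑ k : Fin n, ((α k * α k : ℕ) : ℂ) •
              nom ((α + β) - Pi.single k 1) ((α + β) - Pi.single k 1) := by
      rw [← Finset.sum_sub_distrib]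
      apply Finset.sum_congr rfl
      intro k _
      have hc : ((β k : ℕ) : ℂ) ^ 2 - ((α k : ℕ) : ℂ) ^ 2
          = ((β k * β k : ℕ) : ℂ) - ((α k * α k : ℕ) : ℂ) := by push_cast; ring
      rw [hc]
      exact sub_smul ((β k * β k : ℕ) : ℂ) ((α k * α k : ℕ) : ℂ)
        (nom ((α + β) - Pi.single k 1) ((α + β) - Pi.single k 1))
    rw [hsum]
    abel
  rw [key]
  rw [Sg_comm β α] at h1 h2
  have := degLe_sub h1 h2
  exact degLe_mono (by omega) this
/-! ### dagger -/

lemma dagger_mul (x y : Weyl n) : dagger (x * y) = dagger y * dagger x := by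
  unfold dagger
  rw [map_mul]
  rfl

lemma dagger_one : dagger (1 : Weyl n) = 1 := by
  unfold dagger
  rw [map_one]
  rfl

lemma dagger_ann (k : Fin n) : dagger (ann k) = cre k := by
  unfold dagger daggerHom ann
  have h : (RingQuot.mkAlgHom ℂ (WeylRel n)) (FreeAlgebra.ι ℂ (Sum.inl k))
      = RingQuot.mkRingHom (WeylRel n) (FreeAlgebra.ι ℂ (Sum.inl k)) := by
    rw [← RingQuot.mkAlgHom_coe ℂ]
    rfl
  rw [h, RingQuot.lift_mkRingHom_apply]
  show MulOpposite.unop ((daggerAux n) (FreeAlgebra.ι ℂ (Sum.inl k))) = cre k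
  erw [daggerAux, FreeAlgebra.lift_ι_apply]
  rfl

lemma dagger_cre (k : Fin n) : dagger (cre k) = ann k := by
  unfold dagger daggerHom cre
  have h : (RingQuot.mkAlgHom ℂ (WeylRel n)) (FreeAlgebra.ι ℂ (Sum.inr k))
      = RingQuot.mkRingHom (WeylRel n) (FreeAlgebra.ι ℂ (Sum.inr k)) := by
    rw [← RingQuot.mkAlgHom_coe ℂ]
    rfl
  rw [h, RingQuot.lift_mkRingHom_apply]
  show MulOpposite.unop ((daggerAux n) (FreeAlgebra.ι ℂ (Sum.inr k))) = ann k
  erw [daggerAux, FreeAlgebra.lift_ι_apply]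
  rfl

lemma dagger_gen (a : Fin n ⊕ Fin n) : dagger (gen a) = gen (Sum.swap a) := by
  match a with
  | Sum.inl k => rw [gen_inl, dagger_ann]; rfl
  | Sum.inr k => rw [gen_inr, dagger_cre]; rfl

lemma dagger_word (w : List (Fin n ⊕ Fin n)) :
    dagger (word w) = word ((w.map Sum.swap).reverse) := by
  induction w with
  | nil => simp [dagger_one]
  | cons a t ih =>
    rw [word_cons, dagger_mul, ih, dagger_gen, List.map_cons, List.reverse_cons, word_append]
    simp [word]

lemma count_inr_map_swap (j : Fin n) (w : List (Fin n ⊕ Fin n)) :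
    List.count (Sum.inr j) (w.map Sum.swap) = List.count (Sum.inl j) w := by
  induction w with
  | nil => rfl
  | cons a t ih =>
    match a with
    | Sum.inl k =>
      rw [List.map_cons, List.count_cons, List.count_cons, ih,
        show ((Sum.swap (Sum.inl k) : Fin n ⊕ Fin n) == Sum.inr j)
          = ((Sum.inl k : Fin n ⊕ Fin n) == Sum.inl j) from rfl]
    | Sum.inr k =>
      rw [List.map_cons, List.count_cons, List.count_cons, ih,
        show ((Sum.swap (Sum.inr k) : Fin n ⊕ Fin n) == Sum.inr j) = false from rfl,
        show ((Sum.inr k : Fin n ⊕ Fin n) == Sum.inl j) = false from rfl]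

lemma count_inl_map_swap (j : Fin n) (w : List (Fin n ⊕ Fin n)) :
    List.count (Sum.inl j) (w.map Sum.swap) = List.count (Sum.inr j) w := by
  induction w with
  | nil => rfl
  | cons a t ih =>
    match a with
    | Sum.inr k =>
      rw [List.map_cons, List.count_cons, List.count_cons, ih,
        show ((Sum.swap (Sum.inr k) : Fin n ⊕ Fin n) == Sum.inl j)
          = ((Sum.inr k : Fin n ⊕ Fin n) == Sum.inr j) from rfl]
    | Sum.inl k =>
      rw [List.map_cons, List.count_cons, List.count_cons, ih,
        show ((Sum.swap (Sum.inl k) : Fin n ⊕ Fin n) == Sum.inl j) = false from rfl,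
        show ((Sum.inl k : Fin n ⊕ Fin n) == Sum.inr j) = false from rfl]

lemma mdegC_dagger (w : List (Fin n ⊕ Fin n)) :
    mdegC ((w.map Sum.swap).reverse) = mdegA w := by
  funext j
  show List.count (Sum.inr j) (w.map Sum.swap).reverse = _
  rw [List.count_reverse, count_inr_map_swap]
  rfl

lemma mdegA_dagger (w : List (Fin n ⊕ Fin n)) :
    mdegA ((w.map Sum.swap).reverse) = mdegC w := by
  funext j
  show List.count (Sum.inl j) (w.map Sum.swap).reverse = _
  rw [List.count_reverse, count_inl_map_swap]
  rfl

lemma nom_zero_zero : nom (0 : Fin n → ℕ) 0 = 1 := by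
  rw [nom]
  have h1 : ((List.finRange n).map fun j => cre j ^ (0 : Fin n → ℕ) j) =
      (List.finRange n).map fun _ => (1 : Weyl n) := by
    apply List.map_congr_left; intro j _; simp
  have h2 : ((List.finRange n).map fun j => ann j ^ (0 : Fin n → ℕ) j) =
      (List.finRange n).map fun _ => (1 : Weyl n) := by
    apply List.map_congr_left; intro j _; simp
  rw [h1, h2]
  simp [List.prod_eq_one]

lemma word_expand (w : List (Fin n ⊕ Fin n)) :
    degLe (word w - nom (mdegC w) (mdegA w))
      (((∑ j, mdegC w j : ℕ) : ℤ) + ((∑ j, mdegA w j : ℕ) : ℤ) - 2) := by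
  have h := nom_mul_word_expand w 0 0
  rw [nom_zero_zero, one_mul, zero_add, zero_add] at h
  refine degLe_mono ?_ h
  have hl := length_eq_mdeg w
  rw [Sg]
  have hz : (∑ j, (0 : Fin n → ℕ) j) = 0 := by simp
  rw [hz]
  omega
/-! ### polynomial representation -/

open MvPolynomial

lemma pderiv_pderiv_comm (i j : Fin n) (p : MvPolynomial (Fin n) ℂ) :
    pderiv i (pderiv j p) = pderiv j (pderiv i p) := by
  induction p using MvPolynomial.induction_on with
  | C a => simp
  | add p q hp hq => simp [hp, hq]
  | mul_X p k hp =>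
    by_cases hik : k = i <;> by_cases hjk : k = j
    · subst hik; subst hjk
      simp only [pderiv_mul, map_add, hp]
    · subst hik
      simp only [pderiv_mul, map_add, hp, pderiv_X_self, pderiv_X_of_ne hjk, mul_one, mul_zero,
        map_zero, add_zero, zero_add, map_one]
    · subst hjk
      simp only [pderiv_mul, map_add, hp, pderiv_X_self, pderiv_X_of_ne hik, mul_one, mul_zero,
        map_zero, add_zero, zero_add, map_one]
    · simp only [pderiv_mul, map_add, hp, pderiv_X_of_ne hik, pderiv_X_of_ne hjk, mul_zero,
        map_zero, add_zero]

noncomputable def repF : (Fin n ⊕ Fin n) → Module.End ℂ (MvPolynomial (Fin n) ℂ) :=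
  Sum.elim (fun k => (MvPolynomial.pderiv k).toLinearMap)
    (fun k => LinearMap.mulLeft ℂ (MvPolynomial.X k))

lemma repF_inl_apply (k : Fin n) (p : MvPolynomial (Fin n) ℂ) :
    repF (Sum.inl k) p = MvPolynomial.pderiv k p := rfl

lemma repF_inr_apply (k : Fin n) (p : MvPolynomial (Fin n) ℂ) :
    repF (Sum.inr k) p = MvPolynomial.X k * p := rfl

lemma repRel : ∀ ⦃x y : FreeAlgebra ℂ (Fin n ⊕ Fin n)⦄, WeylRel n x y →
    (FreeAlgebra.lift ℂ (repF (n := n))) x = (FreeAlgebra.lift ℂ (repF (n := n))) y := by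
  intro x y h
  induction h with
  | ann_cre i j =>
    by_cases hij : i = j
    · subst hij
      rw [if_pos rfl]
      simp only [map_mul, map_add, map_one, FreeAlgebra.lift_ι_apply]
      apply LinearMap.ext
      intro p
      simp only [Module.End.mul_apply, LinearMap.add_apply, Module.End.one_apply,
        repF_inl_apply, repF_inr_apply]
      rw [pderiv_mul, pderiv_X_self, one_mul]
      ring
    · rw [if_neg hij]
      simp only [map_mul, map_add, map_zero, add_zero, FreeAlgebra.lift_ι_apply]
      apply LinearMap.ext
      intro p
      simp only [Module.End.mul_apply, repF_inl_apply, repF_inr_apply]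
      rw [pderiv_mul, pderiv_X_of_ne (fun h => hij h.symm), zero_mul, zero_add]
  | ann_ann i j =>
    simp only [map_mul, FreeAlgebra.lift_ι_apply]
    apply LinearMap.ext
    intro p
    simp only [Module.End.mul_apply, repF_inl_apply]
    exact pderiv_pderiv_comm i j p
  | cre_cre i j =>
    simp only [map_mul, FreeAlgebra.lift_ι_apply]
    apply LinearMap.ext
    intro p
    simp only [Module.End.mul_apply, repF_inr_apply]
    ring

noncomputable def rep : Weyl n →ₐ[ℂ] Module.End ℂ (MvPolynomial (Fin n) ℂ) :=
  RingQuot.liftAlgHom ℂ ⟨FreeAlgebra.lift ℂ (repF (n := n)), repRel⟩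

lemma rep_ann (k : Fin n) : rep (ann k) = repF (Sum.inl k) := by
  rw [rep, ann, RingQuot.liftAlgHom_mkAlgHom_apply, FreeAlgebra.lift_ι_apply]

lemma rep_cre (k : Fin n) : rep (cre k) = repF (Sum.inr k) := by
  rw [rep, cre, RingQuot.liftAlgHom_mkAlgHom_apply, FreeAlgebra.lift_ι_apply]

/-- `toF` : functions to finsupps. -/
noncomputable def toF (d : Fin n → ℕ) : Fin n →₀ ℕ := Finsupp.equivFunOnFinite.symm d

lemma toF_apply (d : Fin n → ℕ) (j : Fin n) : toF d j = d j := rfl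

lemma toF_injective : Function.Injective (toF (n := n)) :=
  Finsupp.equivFunOnFinite.symm.injective

lemma rep_ann_pow_monomial (k : Fin n) (m : ℕ) (d : Fin n →₀ ℕ) :
    (rep (ann k ^ m)) (monomial d 1)
      = (((d k).descFactorial m : ℕ) : ℂ) • monomial (d - Finsupp.single k m) 1 := by
  induction m with
  | zero => simp
  | succ m ih =>
    rw [pow_succ', map_mul, Module.End.mul_apply, ih, LinearMap.map_smul, rep_ann,
      repF_inl_apply, pderiv_monomial]
    have hco : (d - Finsupp.single k m) k = d k - m := by
      rw [Finsupp.tsub_apply, Finsupp.single_eq_same]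
    have hexp : d - Finsupp.single k m - Finsupp.single k 1 = d - Finsupp.single k (m + 1) := by
      rw [tsub_tsub, ← Finsupp.single_add]
    rw [one_mul, hco, hexp, show (monomial (d - Finsupp.single k (m+1))) ((d k - m : ℕ) : ℂ)
        = ((d k - m : ℕ) : ℂ) • (monomial (d - Finsupp.single k (m+1))) (1 : ℂ) by
      rw [smul_monomial, smul_eq_mul, mul_one], smul_smul]
    congr 1
    rw [Nat.descFactorial_succ]
    push_cast
    ring

lemma rep_cre_pow_monomial (k : Fin n) (m : ℕ) (d : Fin n →₀ ℕ) (c : ℂ) :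
    (rep (cre k ^ m)) (monomial d c) = monomial (Finsupp.single k m + d) c := by
  induction m with
  | zero => simp
  | succ m ih =>
    rw [pow_succ', map_mul, Module.End.mul_apply, ih, rep_cre, repF_inr_apply,
      show (X k : MvPolynomial (Fin n) ℂ) = monomial (Finsupp.single k 1) 1 by
        rw [← X_pow_eq_monomial, pow_one], monomial_mul, one_mul, ← add_assoc, ← Finsupp.single_add,
      Nat.add_comm 1 m]

lemma sum_single_apply (b : Fin n → ℕ) (j : Fin n) :
    ∀ t : List (Fin n), ((t.map fun i => Finsupp.single i (b i)).sum) j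
      = (t.map fun i => if i = j then b i else 0).sum := by
  intro t
  induction t with
  | nil => rfl
  | cons a s ih =>
    rw [List.map_cons, List.map_cons, List.sum_cons, List.sum_cons, Finsupp.add_apply, ih,
      Finsupp.single_apply]

lemma sum_single_apply_of_not_mem (b : Fin n → ℕ) (j : Fin n) (t : List (Fin n)) (hj : j ∉ t) :
    ((t.map fun i => Finsupp.single i (b i)).sum) j = 0 := by
  rw [sum_single_apply]
  apply List.sum_eq_zero
  intro x hx
  simp only [List.mem_map] at hx
  obtain ⟨i, hi, rfl⟩ := hx
  have : i ≠ j := fun h => hj (h ▸ hi)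
  rw [if_neg this]

lemma sum_single_finRange (b : Fin n → ℕ) :
    ((List.finRange n).map fun i => Finsupp.single i (b i)).sum = toF b := by
  ext j
  rw [sum_single_apply, ← Fin.sum_univ_def, Finset.sum_ite_eq' Finset.univ j b,
    if_pos (Finset.mem_univ j), toF_apply]

lemma rep_aP_list (b : Fin n → ℕ) :
    ∀ (l : List (Fin n)), l.Nodup → ∀ d : Fin n →₀ ℕ,
    (rep ((l.map fun j => ann j ^ b j).prod)) (monomial d 1)
      = ((((l.map fun j => (d j).descFactorial (b j)).prod : ℕ)) : ℂ) •
          monomial (d - (l.map fun j => Finsupp.single j (b j)).sum) 1 := by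
  intro l
  induction l with
  | nil => intro _ d; simp
  | cons j t ih =>
    intro hnd d
    rcases List.nodup_cons.mp hnd with ⟨hjt, hnd'⟩
    rw [List.map_cons, List.prod_cons, map_mul, Module.End.mul_apply, ih hnd' d,
      LinearMap.map_smul, rep_ann_pow_monomial]
    have hSj : (d - (t.map fun i => Finsupp.single i (b i)).sum) j = d j := by
      rw [Finsupp.tsub_apply, sum_single_apply_of_not_mem b j t hjt, Nat.sub_zero]
    have hexp : d - (t.map fun i => Finsupp.single i (b i)).sum - Finsupp.single j (b j)
        = d - ((j :: t).map fun i => Finsupp.single i (b i)).sum := by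
      rw [tsub_tsub, List.map_cons, List.sum_cons, add_comm]
    rw [hSj, hexp, smul_smul]
    congr 1
    rw [List.map_cons, List.prod_cons]
    push_cast
    ring

lemma rep_cP_list (a : Fin n → ℕ) :
    ∀ (l : List (Fin n)) (d : Fin n →₀ ℕ) (c : ℂ),
    (rep ((l.map fun j => cre j ^ a j).prod)) (monomial d c)
      = monomial ((l.map fun j => Finsupp.single j (a j)).sum + d) c := by
  intro l
  induction l with
  | nil => intro d c; simp
  | cons j t ih =>
    intro d c
    rw [List.map_cons, List.prod_cons, map_mul, Module.End.mul_apply, ih,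
      rep_cre_pow_monomial, List.map_cons, List.sum_cons, add_assoc]

lemma rep_nom_monomial (a b : Fin n → ℕ) (d : Fin n →₀ ℕ) :
    rep (nom a b) (monomial d 1)
      = ((∏ j, (d j).descFactorial (b j) : ℕ) : ℂ) • monomial (toF a + (d - toF b)) 1 := by
  rw [nom_eq_cP_aP, map_mul, Module.End.mul_apply]
  show rep (cP a) ((rep (aP b)) (monomial d 1)) = _
  rw [aP, rep_aP_list b (List.finRange n) (List.nodup_finRange n) d, LinearMap.map_smul, cP,
    rep_cP_list, sum_single_finRange, sum_single_finRange]
  congr 2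
/-! ### linear independence of normal-ordered monomials -/

lemma nom_linearIndependent :
    LinearIndependent ℂ (fun γ : (Fin n → ℕ) × (Fin n → ℕ) => nom γ.1 γ.2) := by
  rw [linearIndependent_iff]
  intro c hc
  by_contra hne
  have hsupp : c.support.Nonempty := Finsupp.support_nonempty_iff.mpr hne
  obtain ⟨b₀, hb₀mem, hb₀min⟩ : ∃ b ∈ c.support.image Prod.snd,
      ∀ x ∈ c.support.image Prod.snd, ¬x < b :=
    (Finset.exists_minimal (hsupp.image _)).elim
      fun b hb => ⟨b, hb.1, fun x hx hlt => hlt.not_ge (hb.2 hx hlt.le)⟩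
  obtain ⟨γ₀, hγ₀, hγ₀b⟩ := Finset.mem_image.mp hb₀mem
  have h0 : rep (Finsupp.linearCombination ℂ
      (fun γ : (Fin n → ℕ) × (Fin n → ℕ) => nom γ.1 γ.2) c) = 0 := by
    rw [hc, map_zero]
  have h1 : (rep (Finsupp.linearCombination ℂ
        (fun γ : (Fin n → ℕ) × (Fin n → ℕ) => nom γ.1 γ.2) c)) (monomial (toF b₀) (1 : ℂ))
      = ∑ γ ∈ c.support, c γ • (rep (nom γ.1 γ.2)) (monomial (toF b₀) 1) := by
    rw [Finsupp.linearCombination_apply, Finsupp.sum, map_sum, LinearMap.sum_apply]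
    exact Finset.sum_congr rfl fun γ _ => by rw [map_smul, LinearMap.smul_apply]
  have key : MvPolynomial.coeff (toF γ₀.1) ((rep (Finsupp.linearCombination ℂ
      (fun γ : (Fin n → ℕ) × (Fin n → ℕ) => nom γ.1 γ.2) c)) (monomial (toF b₀) (1 : ℂ))) = 0 := by
    rw [h0]
    simp
  rw [h1, coeff_sum] at key
  have hterm : ∀ γ ∈ c.support, γ ≠ γ₀ →
      MvPolynomial.coeff (toF γ₀.1) (c γ • (rep (nom γ.1 γ.2)) (monomial (toF b₀) 1)) = 0 := by
    intro γ hγ hγne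
    rw [rep_nom_monomial, coeff_smul, coeff_smul, coeff_monomial]
    by_cases hle : γ.2 ≤ b₀
    · have heq : γ.2 = b₀ := by
        by_contra hlt
        exact hb₀min γ.2 (Finset.mem_image.mpr ⟨γ, hγ, rfl⟩) (lt_of_le_of_ne hle hlt)
      have hz : toF b₀ - toF γ.2 = 0 := by rw [heq]; exact tsub_self _
      rw [hz, add_zero, if_neg]
      · simp
      · intro hTF
        apply hγne
        have h11 : γ.1 = γ₀.1 := toF_injective hTF
        exact Prod.ext h11 (heq.trans hγ₀b.symm ▸ by rw [heq, ← hγ₀b])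
    · have hj : ∃ j, b₀ j < γ.2 j := by
        by_contra hcon
        push_neg at hcon
        exact hle fun j => le_of_not_gt (fun hlt => absurd (hcon j) (not_le.mpr hlt))
      obtain ⟨j, hj⟩ := hj
      have hCF : (∏ i, ((toF b₀) i).descFactorial (γ.2 i)) = 0 := by
        apply Finset.prod_eq_zero (Finset.mem_univ j)
        rw [toF_apply]
        exact Nat.descFactorial_eq_zero_iff_lt.mpr hj
      rw [hCF]
      simp
  rw [Finset.sum_eq_single γ₀ hterm (fun h => absurd hγ₀ h)] at key
  rw [rep_nom_monomial, hγ₀b, tsub_self, add_zero, coeff_smul, coeff_smul, coeff_monomial,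
    if_pos rfl] at key
  have hCF : (∏ i, ((toF b₀) i).descFactorial (b₀ i)) ≠ 0 := by
    apply Finset.prod_ne_zero_iff.mpr
    intro i _
    rw [toF_apply]
    rw [Nat.descFactorial_self]
    exact Nat.factorial_ne_zero _
  have : c γ₀ = 0 := by
    simp only [smul_eq_mul, mul_one] at key
    rcases mul_eq_zero.mp key with h | h
    · exact h
    · exact absurd (Nat.cast_eq_zero.mp h) hCF
  exact absurd this (Finsupp.mem_support_iff.mp hγ₀)

lemma not_degLe_of_coeff {d : ℤ} (c' : ((Fin n → ℕ) × (Fin n → ℕ)) →₀ ℂ)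
    (γ : (Fin n → ℕ) × (Fin n → ℕ)) (hγ : c' γ ≠ 0) (hd : d < Sg γ.1 γ.2)
    (hx : degLe (Finsupp.linearCombination ℂ
      (fun γ : (Fin n → ℕ) × (Fin n → ℕ) => nom γ.1 γ.2) c') d) : False := by
  obtain ⟨c, hc, hs⟩ := hx
  have h1 : Finsupp.linearCombination ℂ
      (fun γ : (Fin n → ℕ) × (Fin n → ℕ) => nom γ.1 γ.2) c
      = Finsupp.linearCombination ℂ
        (fun γ : (Fin n → ℕ) × (Fin n → ℕ) => nom γ.1 γ.2) c' := by
    rw [Finsupp.linearCombination_apply]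
    exact hc.symm
  have h2 := linearIndependent_iff.mp nom_linearIndependent (c - c')
    (by rw [map_sub, h1, sub_self])
  have hcc : c = c' := sub_eq_zero.mp h2
  have hmem : γ ∈ c.support := by rw [hcc]; exact Finsupp.mem_support_iff.mpr hγ
  have hle := hs γ hmem
  rw [show ((∑ j, γ.1 j : ℕ) : ℤ) + ((∑ j, γ.2 j : ℕ) : ℤ) = Sg γ.1 γ.2 from rfl] at hle
  omega
/-! ### final assembly -/

theorem statement13_aux {n : ℕ} (w : List (Fin n ⊕ Fin n))
    (hne : mdegC w ≠ mdegA w) :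
    hasDeg (comm (Complex.I • (dagger (word w) + word w)) (dagger (word w) - word w))
      (2 * ((∑ j, (mdegC w j : ℤ)) + ∑ j, (mdegA w j : ℤ)) - 2) ∧
    degLe
      (comm (Complex.I • (dagger (word w) + word w)) (dagger (word w) - word w) -
        (-2 * Complex.I) • ∑ k : Fin n,
          (((mdegC w k : ℂ)) ^ 2 - ((mdegA w k : ℂ)) ^ 2) •
            nom (mdegC w + mdegA w - Pi.single k 1) (mdegC w + mdegA w - Pi.single k 1))
      (2 * ((∑ j, (mdegC w j : ℤ)) + ∑ j, (mdegA w j : ℤ)) - 2 - 1) := by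
  have hsum1 : (∑ j, (mdegC w j : ℤ)) = ((∑ j, mdegC w j : ℕ) : ℤ) := by push_cast; rfl
  have hsum2 : (∑ j, (mdegA w j : ℤ)) = ((∑ j, mdegA w j : ℕ) : ℤ) := by push_cast; rfl
  -- Step A : reduce the commutator
  have hcommexp : comm (Complex.I • (dagger (word w) + word w)) (dagger (word w) - word w)
      = (2 * Complex.I) • comm (word w) (dagger (word w)) := by
    rw [comm_smul_left]
    have h2 : comm (dagger (word w) + word w) (dagger (word w) - word w)
        = comm (word w) (dagger (word w)) + comm (word w) (dagger (word w)) := by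
      simp only [comm, mul_sub, sub_mul, add_mul, mul_add]
      abel
    rw [h2]
    module
  -- Step B : expansions of the word and its dagger
  have hm : degLe (word w - nom (mdegC w) (mdegA w)) (Sg (mdegC w) (mdegA w) - 2) :=
    word_expand w
  have hmd : degLe (dagger (word w) - nom (mdegA w) (mdegC w)) (Sg (mdegA w) (mdegC w) - 2) := by
    rw [dagger_word]
    have h := word_expand ((w.map Sum.swap).reverse)
    rw [mdegC_dagger, mdegA_dagger] at h
    exact h
  -- T' : the second-order term from the core commutator
  set T' := ∑ k : Fin n, (((mdegA w k : ℕ) : ℂ) ^ 2 - ((mdegC w k : ℕ) : ℂ) ^ 2) •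
      nom ((mdegC w + mdegA w) - Pi.single k 1) ((mdegC w + mdegA w) - Pi.single k 1) with hT'
  have hcore := comm_nom_nom_expand (mdegC w) (mdegA w)
  -- Step D : decomposition
  have hmeq : word w = nom (mdegC w) (mdegA w) + (word w - nom (mdegC w) (mdegA w)) := by
    rw [add_comm, sub_add_cancel]
  have hmdeq : dagger (word w)
      = nom (mdegA w) (mdegC w) + (dagger (word w) - nom (mdegA w) (mdegC w)) := by
    rw [add_comm, sub_add_cancel]
  have hEdeg : degLe (comm (word w) (dagger (word w)) - T')
      (2 * Sg (mdegC w) (mdegA w) - 3) := by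
    have hgen : ∀ m md p q t : Weyl n, comm m md - t
        = (comm p q - t) + (comm p (md - q) + (comm (m - p) q + comm (m - p) (md - q))) := by
      intro m md p q t
      have h1 : m = p + (m - p) := by rw [add_comm, sub_add_cancel]
      have h2 : md = q + (md - q) := by rw [add_comm, sub_add_cancel]
      conv_lhs => rw [h1, h2]
      rw [comm_add_left, comm_add_right, comm_add_right]
      abel
    have hdecomp := hgen (word w) (dagger (word w)) (nom (mdegC w) (mdegA w))
      (nom (mdegA w) (mdegC w)) T'
    rw [hdecomp]
    have hSg := Sg_comm (mdegA w) (mdegC w)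
    apply degLe_add
    · exact degLe_mono (by omega) hcore
    apply degLe_add
    · exact degLe_mono (by omega) (degLe_comm (degLe_nom' (mdegC w) (mdegA w)) hmd)
    apply degLe_add
    · exact degLe_mono (by omega) (degLe_comm hm (degLe_nom' (mdegA w) (mdegC w)))
    · exact degLe_mono (by omega) (degLe_comm hm hmd)
  -- relating the statement's sum with T'
  have hTT : (-2 * Complex.I) • (∑ k : Fin n,
        (((mdegC w k : ℂ)) ^ 2 - ((mdegA w k : ℂ)) ^ 2) •
          nom (mdegC w + mdegA w - Pi.single k 1) (mdegC w + mdegA w - Pi.single k 1))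
      = (2 * Complex.I) • T' := by
    rw [hT', Finset.smul_sum, Finset.smul_sum]
    refine Finset.sum_congr rfl fun k _ => ?_
    module
  -- second claim
  have goal2 : degLe
      (comm (Complex.I • (dagger (word w) + word w)) (dagger (word w) - word w) -
        (-2 * Complex.I) • ∑ k : Fin n,
          (((mdegC w k : ℂ)) ^ 2 - ((mdegA w k : ℂ)) ^ 2) •
            nom (mdegC w + mdegA w - Pi.single k 1) (mdegC w + mdegA w - Pi.single k 1))
      (2 * ((∑ j, (mdegC w j : ℤ)) + ∑ j, (mdegA w j : ℤ)) - 2 - 1) := by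
    have heq : comm (Complex.I • (dagger (word w) + word w)) (dagger (word w) - word w) -
        (-2 * Complex.I) • ∑ k : Fin n,
          (((mdegC w k : ℂ)) ^ 2 - ((mdegA w k : ℂ)) ^ 2) •
            nom (mdegC w + mdegA w - Pi.single k 1) (mdegC w + mdegA w - Pi.single k 1)
        = (2 * Complex.I) • (comm (word w) (dagger (word w)) - T') := by
      rw [hcommexp, hTT]
      module
    rw [heq]
    apply degLe_smul
    refine degLe_mono ?_ hEdeg
    rw [Sg, hsum1, hsum2]
    omega
  refine ⟨⟨?_, ?_⟩, goal2⟩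
  · -- degLe E D
    have hsplit : comm (Complex.I • (dagger (word w) + word w)) (dagger (word w) - word w)
        = (comm (Complex.I • (dagger (word w) + word w)) (dagger (word w) - word w) -
            (-2 * Complex.I) • ∑ k : Fin n,
              (((mdegC w k : ℂ)) ^ 2 - ((mdegA w k : ℂ)) ^ 2) •
                nom (mdegC w + mdegA w - Pi.single k 1) (mdegC w + mdegA w - Pi.single k 1))
          + (-2 * Complex.I) • ∑ k : Fin n,
              (((mdegC w k : ℂ)) ^ 2 - ((mdegA w k : ℂ)) ^ 2) •
                nom (mdegC w + mdegA w - Pi.single k 1) (mdegC w + mdegA w - Pi.single k 1) := by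
      rw [sub_add_cancel]
    rw [hsplit]
    apply degLe_add
    · exact degLe_mono (by omega) goal2
    · apply degLe_smul
      apply degLe_sum
      intro k _
      by_cases hk : mdegC w k = mdegA w k
      · rw [hk, sub_self, zero_smul]
        exact degLe_zero _
      · apply degLe_smul
        apply degLe_nom''
        have hab : (mdegC w + mdegA w) k ≠ 0 := by
          simp only [Pi.add_apply]
          omega
        have h5 := sum_sub_single (β := mdegC w + mdegA w) (k := k) hab
        have h6 := sum_add_fun (mdegC w) (mdegA w)
        rw [Sg, hsum1, hsum2]
        omega
  · -- ¬ degLe E (D - 1)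
    intro hcon
    obtain ⟨k₀, hk₀⟩ : ∃ k, mdegC w k ≠ mdegA w k := by
      by_contra hcon2
      push_neg at hcon2
      exact hne (funext hcon2)
    set γ₀ : (Fin n → ℕ) × (Fin n → ℕ) :=
      ((mdegC w + mdegA w) - Pi.single k₀ 1, (mdegC w + mdegA w) - Pi.single k₀ 1) with hγ₀
    set c' : ((Fin n → ℕ) × (Fin n → ℕ)) →₀ ℂ :=
      ∑ k : Fin n, Finsupp.single
        (((mdegC w + mdegA w) - Pi.single k 1, (mdegC w + mdegA w) - Pi.single k 1))
        ((-2 * Complex.I) * (((mdegC w k : ℂ)) ^ 2 - ((mdegA w k : ℂ)) ^ 2)) with hc'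
    have hlc : Finsupp.linearCombination ℂ
        (fun γ : (Fin n → ℕ) × (Fin n → ℕ) => nom γ.1 γ.2) c'
        = (-2 * Complex.I) • ∑ k : Fin n,
            (((mdegC w k : ℂ)) ^ 2 - ((mdegA w k : ℂ)) ^ 2) •
              nom (mdegC w + mdegA w - Pi.single k 1) (mdegC w + mdegA w - Pi.single k 1) := by
      rw [hc', map_sum, Finset.smul_sum]
      refine Finset.sum_congr rfl fun k _ => ?_
      rw [Finsupp.linearCombination_single]
      module
    have hS : degLe ((-2 * Complex.I) • ∑ k : Fin n,
        (((mdegC w k : ℂ)) ^ 2 - ((mdegA w k : ℂ)) ^ 2) •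
          nom (mdegC w + mdegA w - Pi.single k 1) (mdegC w + mdegA w - Pi.single k 1))
        (2 * ((∑ j, (mdegC w j : ℤ)) + ∑ j, (mdegA w j : ℤ)) - 2 - 1) := by
      have hrw : (-2 * Complex.I) • ∑ k : Fin n,
          (((mdegC w k : ℂ)) ^ 2 - ((mdegA w k : ℂ)) ^ 2) •
            nom (mdegC w + mdegA w - Pi.single k 1) (mdegC w + mdegA w - Pi.single k 1)
          = comm (Complex.I • (dagger (word w) + word w)) (dagger (word w) - word w)
            - (comm (Complex.I • (dagger (word w) + word w)) (dagger (word w) - word w) -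
              (-2 * Complex.I) • ∑ k : Fin n,
                (((mdegC w k : ℂ)) ^ 2 - ((mdegA w k : ℂ)) ^ 2) •
                  nom (mdegC w + mdegA w - Pi.single k 1) (mdegC w + mdegA w - Pi.single k 1)) := by
        rw [sub_sub_cancel]
      rw [hrw]
      exact degLe_sub hcon goal2
    rw [← hlc] at hS
    have hcoeff : c' γ₀ ≠ 0 := by
      rw [hc']
      rw [Finsupp.finset_sum_apply]
      rw [Finset.sum_eq_single k₀]
      · rw [Finsupp.single_eq_same]
        apply mul_ne_zero
        · apply mul_ne_zero
          · norm_num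
          · exact Complex.I_ne_zero
        · rw [sub_ne_zero]
          intro hsq
          apply hk₀
          have : (mdegC w k₀) ^ 2 = (mdegA w k₀) ^ 2 := by exact_mod_cast hsq
          nlinarith [this]
      · intro k _ hkk
        by_cases hab : mdegC w k = mdegA w k
        · rw [hab, sub_self, mul_zero, Finsupp.single_zero]
          rfl
        · rw [Finsupp.single_apply, if_neg]
          intro heq
          have h1 : ((mdegC w + mdegA w) - Pi.single k 1 : Fin n → ℕ)
              = (mdegC w + mdegA w) - Pi.single k₀ 1 := congrArg Prod.fst heq
          have h2 := congrFun h1 k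
          simp only [Pi.sub_apply, Pi.add_apply, Pi.single_eq_same,
            Pi.single_eq_of_ne hkk] at h2
          omega
      · intro h
        exact absurd (Finset.mem_univ k₀) h
    have hd : 2 * ((∑ j, (mdegC w j : ℤ)) + ∑ j, (mdegA w j : ℤ)) - 2 - 1
        < Sg ((mdegC w + mdegA w) - Pi.single k₀ 1) ((mdegC w + mdegA w) - Pi.single k₀ 1) := by
      have hab : (mdegC w + mdegA w) k₀ ≠ 0 := by
        simp only [Pi.add_apply]
        omega
      have h5 := sum_sub_single (β := mdegC w + mdegA w) (k := k₀) hab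
      have h6 := sum_add_fun (mdegC w) (mdegA w)
      rw [Sg, hsum1, hsum2]
      omega
    exact not_degLe_of_coeff c' γ₀ hcoeff hd hS

/-- For a monomial `m` with multi-degree `(α, β)` and `α ≠ β`, with
`g₊(m) = i(m† + m)` and `g₋(m) = m† - m`, one has
`deg([g₊(m), g₋(m)]) = 2(|α| + |β|) - 2`, and `[g₊(m), g₋(m)]` agrees, up to terms
of degree strictly less than `2(|α|+|β|)-2`, with
`-2i ∑ₖ (αₖ² - βₖ²) a^{(α+β-eₖ, α+β-eₖ)}`. -/
theorem statement13 {n : ℕ} (w : List (Fin n ⊕ Fin n))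
    (hne : mdegC w ≠ mdegA w) :
    hasDeg (comm (Complex.I • (dagger (word w) + word w)) (dagger (word w) - word w))
      (2 * ((∑ j, (mdegC w j : ℤ)) + ∑ j, (mdegA w j : ℤ)) - 2) ∧
    degLe
      (comm (Complex.I • (dagger (word w) + word w)) (dagger (word w) - word w) -
        (-2 * Complex.I) • ∑ k : Fin n,
          (((mdegC w k : ℂ)) ^ 2 - ((mdegA w k : ℂ)) ^ 2) •
            nom (mdegC w + mdegA w - Pi.single k 1) (mdegC w + mdegA w - Pi.single k 1))
      (2 * ((∑ j, (mdegC w j : ℤ)) + ∑ j, (mdegA w j : ℤ)) - 2 - 1) := by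
  exact statement13_aux w hne

end WeylPaper
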